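/- Let f, g be admissible circle densities with cumulative distribution functions F, G and define I(α) = ∫₀¹ (F⁻¹(t) − G⁻¹(t − α))² dt for α ∈ ℝ. Then I is strictly convex on ℝ: for all α₁ ≠ α₂ and all s ∈ (0,1), I(s α₁ + (1−s) α₂) < s I(α₁) + (1−s) I(α₂). -/

import Mathlib

open MeasureTheory Set Function

/-!
Since `F⁻¹(u + 1) = F⁻¹(u) + 1` and `G⁻¹(u + 1) = G⁻¹(u) + 1`, the integrand of `I` is
1-periodic, and shifting gives `I(α) = ∫₀¹ (F⁻¹(t + α) - G⁻¹(t))² dt`. Differentiating under the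
integral, `I'(α) = 2 ∫₀¹ (F⁻¹(t + α) - G⁻¹(t)) (F⁻¹)'(t + α) dt`. The `t`-derivative of the
periodic function `(F⁻¹(t + α) - G⁻¹(t))²` integrates to zero over a period, so `(F⁻¹)'(t + α)`
may be replaced by `(G⁻¹)'(t) = 1 / g(G⁻¹(t)) > 0`. In this form `I'` is strictly increasing,
because `F⁻¹` is.
-/

section CircleCDF

variable {f F Finv : ℝ → ℝ}

theorem hasDerivAt_of_eq_integral (hfc : Continuous f)
    (hF : ∀ t, F t = ∫ τ in (0:ℝ)..t, f τ) (t : ℝ) : HasDerivAt F (f t) t := by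
  rw [funext hF]
  exact (hfc.integral_hasStrictDerivAt 0 t).hasDerivAt

theorem add_one_of_eq_integral (hfc : Continuous f) (hfp : Periodic f 1)
    (hfm : ∫ t in (0:ℝ)..1, f t = 1) (hF : ∀ t, F t = ∫ τ in (0:ℝ)..t, f τ) (t : ℝ) :
    F (t + 1) = F t + 1 := by
  have h := intervalIntegral.integral_interval_sub_left
    (hfc.intervalIntegrable (μ := volume) 0 (t + 1)) (hfc.intervalIntegrable 0 t)
  rw [← hF, ← hF, hfp.intervalIntegral_add_eq t 0, zero_add, hfm] at h
  linarith

theorem hasDerivAt_rightInverse_of_hasDerivAt_pos (hF : ∀ t, HasDerivAt F (f t) t)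
    (hf : ∀ t, 0 < f t) (hFinv : RightInverse Finv F) (u : ℝ) :
    HasDerivAt Finv (f (Finv u))⁻¹ u := by
  let e := (strictMono_of_hasDerivAt_pos hF hf).orderIsoOfRightInverse F Finv hFinv
  exact (hF (Finv u)).of_local_left_inverse e.symm.continuous.continuousAt (hf _).ne'
    (.of_forall hFinv)

theorem rightInverse_add_one (hF : Injective F) (hF1 : ∀ t, F (t + 1) = F t + 1)
    (hFinv : RightInverse Finv F) (u : ℝ) : Finv (u + 1) = Finv u + 1 :=
  hF <| by rw [hFinv, hF1, hFinv]

end CircleCDF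

theorem Function.Periodic.intervalIntegral_comp_add_right {E : Type*} [NormedAddCommGroup E]
    [NormedSpace ℝ E] {h : ℝ → E} {T : ℝ} (hh : Periodic h T) (α : ℝ) :
    ∫ t in (0:ℝ)..T, h (t + α) = ∫ t in (0:ℝ)..T, h t := by
  rw [intervalIntegral.integral_comp_add_right, zero_add, add_comm T α,
    hh.intervalIntegral_add_eq α 0, zero_add]

theorem hasDerivAt_intervalIntegral_of_continuous_deriv {E : Type*} [NormedAddCommGroup E]
    [NormedSpace ℝ E] {F F' : ℝ → ℝ → E} (hF : ∀ x, Continuous (F x))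
    (hF' : Continuous (uncurry F')) (hdiff : ∀ x t, HasDerivAt (fun x => F x t) (F' x t) x)
    (a b x₀ : ℝ) :
    HasDerivAt (fun x => ∫ t in a..b, F x t) (∫ t in a..b, F' x₀ t) x₀ := by
  obtain ⟨C, hC⟩ := ((isCompact_closedBall x₀ 1).prod isCompact_uIcc).exists_bound_of_continuousOn
    (hF'.continuousOn (s := Metric.closedBall x₀ 1 ×ˢ uIcc a b))
  exact (intervalIntegral.hasDerivAt_integral_of_dominated_loc_of_deriv_le (bound := fun _ => C)
    (Metric.closedBall_mem_nhds x₀ one_pos) (.of_forall fun x => (hF x).aestronglyMeasurable)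
    ((hF x₀).intervalIntegrable a b)
    ((hF'.comp (continuous_const.prodMk continuous_id)).aestronglyMeasurable)
    (.of_forall fun t ht x hx => hC (x, t) ⟨hx, uIoc_subset_uIcc ht⟩) intervalIntegrable_const
    (.of_forall fun t _ x _ => hdiff x t)).2

section ShiftedSquareDistance

variable {a a' b b' : ℝ → ℝ}

theorem integral_sq_sub_comp_sub_eq (ha1 : ∀ u, a (u + 1) = a u + 1)
    (hb1 : ∀ u, b (u + 1) = b u + 1) (α : ℝ) :
    ∫ t in (0:ℝ)..1, (a t - b (t - α)) ^ 2 = ∫ t in (0:ℝ)..1, (a (t + α) - b t) ^ 2 := by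
  have hper : Periodic (fun t => (a t - b (t - α)) ^ 2) 1 := fun t => by
    simp only [add_sub_right_comm t 1 α, ha1, hb1]
    ring
  rw [← hper.intervalIntegral_comp_add_right α]
  simp only [add_sub_cancel_right]

theorem hasDerivAt_integral_sq_sub_shift (ha : ∀ u, HasDerivAt a (a' u) u) (ha' : Continuous a')
    (hbc : Continuous b) (x : ℝ) :
    HasDerivAt (fun x => ∫ t in (0:ℝ)..1, (a (t + x) - b t) ^ 2)
      (∫ t in (0:ℝ)..1, 2 * (a (t + x) - b t) * a' (t + x)) x := by
  have hac : Continuous a := Differentiable.continuous fun u => (ha u).differentiableAt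
  refine hasDerivAt_intervalIntegral_of_continuous_deriv
    (F' := fun x t => 2 * (a (t + x) - b t) * a' (t + x)) (fun x => by fun_prop) (by fun_prop)
    (fun x t => ?_) 0 1 x
  simpa using (((ha (t + x)).comp x ((hasDerivAt_id x).const_add t)).sub_const (b t)).fun_pow 2

theorem integral_mul_deriv_shift_eq (ha : ∀ u, HasDerivAt a (a' u) u)
    (hb : ∀ u, HasDerivAt b (b' u) u) (ha' : Continuous a') (hb' : Continuous b')
    (ha1 : ∀ u, a (u + 1) = a u + 1) (hb1 : ∀ u, b (u + 1) = b u + 1) (x : ℝ) :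
    ∫ t in (0:ℝ)..1, 2 * (a (t + x) - b t) * a' (t + x) =
      ∫ t in (0:ℝ)..1, 2 * (a (t + x) - b t) * b' t := by
  have hac : Continuous a := Differentiable.continuous fun u => (ha u).differentiableAt
  have hbc : Continuous b := Differentiable.continuous fun u => (hb u).differentiableAt
  have hderiv : ∀ t, HasDerivAt (fun t => (a (t + x) - b t) ^ 2)
      (2 * (a (t + x) - b t) * (a' (t + x) - b' t)) t := fun t => by
    simpa using (((ha (t + x)).comp t ((hasDerivAt_id t).add_const x)).sub (hb t)).fun_pow 2
  have hFTC := intervalIntegral.integral_eq_sub_of_hasDerivAt (fun t _ => hderiv t)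
    ((by fun_prop : Continuous _).intervalIntegrable 0 1)
  rw [← sub_eq_zero, ← intervalIntegral.integral_sub
    ((by fun_prop : Continuous _).intervalIntegrable 0 1)
    ((by fun_prop : Continuous _).intervalIntegrable 0 1)]
  simp only [← mul_sub]
  rw [hFTC, zero_add, add_comm 1 x, ha1, ← zero_add (1 : ℝ), hb1]
  ring

theorem strictMono_integral_mul_shift (ha : StrictMono a) (hac : Continuous a)
    (hbc : Continuous b) (hb' : Continuous b') (hb'pos : ∀ u, 0 < b' u) :
    StrictMono fun x => ∫ t in (0:ℝ)..1, 2 * (a (t + x) - b t) * b' t := by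
  intro x y hxy
  rw [← sub_pos, ← intervalIntegral.integral_sub
    ((by fun_prop : Continuous _).intervalIntegrable 0 1)
    ((by fun_prop : Continuous _).intervalIntegrable 0 1)]
  refine intervalIntegral.intervalIntegral_pos_of_pos
    ((by fun_prop : Continuous _).intervalIntegrable 0 1) (fun t => ?_) one_pos
  have hlt : a (t + x) < a (t + y) := ha (by linarith)
  calc (0 : ℝ) < 2 * (a (t + y) - a (t + x)) * b' t :=
        mul_pos (mul_pos two_pos (sub_pos.2 hlt)) (hb'pos t)
    _ = _ := by ring

theorem strictConvexOn_integral_sq_sub_shift (ha : ∀ u, HasDerivAt a (a' u) u)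
    (hb : ∀ u, HasDerivAt b (b' u) u) (ha' : Continuous a') (hb' : Continuous b')
    (ha1 : ∀ u, a (u + 1) = a u + 1) (hb1 : ∀ u, b (u + 1) = b u + 1) (hamono : StrictMono a)
    (hb'pos : ∀ u, 0 < b' u) :
    StrictConvexOn ℝ univ fun x => ∫ t in (0:ℝ)..1, (a (t + x) - b t) ^ 2 := by
  have hac : Continuous a := Differentiable.continuous fun u => (ha u).differentiableAt
  have hbc : Continuous b := Differentiable.continuous fun u => (hb u).differentiableAt
  have hI' := hasDerivAt_integral_sq_sub_shift ha ha' hbc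
  refine StrictMono.strictConvexOn_univ_of_deriv
    (continuous_iff_continuousAt.2 fun x => (hI' x).continuousAt) ?_
  have hderiv : deriv (fun x => ∫ t in (0:ℝ)..1, (a (t + x) - b t) ^ 2) =
      fun x => ∫ t in (0:ℝ)..1, 2 * (a (t + x) - b t) * b' t :=
    funext fun x => (hI' x).deriv.trans (integral_mul_deriv_shift_eq ha hb ha' hb' ha1 hb1 x)
  rw [hderiv]
  exact strictMono_integral_mul_shift hamono hac hbc hb' hb'pos

end ShiftedSquareDistance

theorem I_strictly_convex_general
    (f g F G Finv Ginv : ℝ → ℝ) (η : ℝ) (hη : 0 < η)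
    (hfc : Continuous f) (hgc : Continuous g)
    (hfp : Function.Periodic f 1) (hgp : Function.Periodic g 1)
    (hfl : ∀ t, η ≤ f t) (hgl : ∀ t, η ≤ g t)
    (hfm : (∫ t in (0:ℝ)..1, f t) = 1) (hgm : (∫ t in (0:ℝ)..1, g t) = 1)
    (hF : ∀ t, F t = ∫ τ in (0:ℝ)..t, f τ) (hG : ∀ t, G t = ∫ τ in (0:ℝ)..t, g τ)
    (hF₂ : Function.RightInverse Finv F) (hG₂ : Function.RightInverse Ginv G)
    (I : ℝ → ℝ) (hI : ∀ α, I α = ∫ t in (0:ℝ)..1, (Finv t - Ginv (t - α)) ^ 2) :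
    ∀ α₁ α₂ : ℝ, α₁ ≠ α₂ → ∀ s ∈ Set.Ioo (0:ℝ) 1,
      I (s * α₁ + (1 - s) * α₂) < s * I α₁ + (1 - s) * I α₂ := by
  have hfpos : ∀ t, 0 < f t := fun t => hη.trans_le (hfl t)
  have hgpos : ∀ t, 0 < g t := fun t => hη.trans_le (hgl t)
  have hF' := hasDerivAt_of_eq_integral hfc hF
  have hG' := hasDerivAt_of_eq_integral hgc hG
  have hFinv' := hasDerivAt_rightInverse_of_hasDerivAt_pos hF' hfpos hF₂
  have hGinv' := hasDerivAt_rightInverse_of_hasDerivAt_pos hG' hgpos hG₂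
  have hFinv1 := rightInverse_add_one (strictMono_of_hasDerivAt_pos hF' hfpos).injective
    (add_one_of_eq_integral hfc hfp hfm hF) hF₂
  have hGinv1 := rightInverse_add_one (strictMono_of_hasDerivAt_pos hG' hgpos).injective
    (add_one_of_eq_integral hgc hgp hgm hG) hG₂
  have hFinvc : Continuous Finv := Differentiable.continuous fun u => (hFinv' u).differentiableAt
  have hGinvc : Continuous Ginv := Differentiable.continuous fun u => (hGinv' u).differentiableAt
  have hconv := strictConvexOn_integral_sq_sub_shift hFinv' hGinv'
    ((hfc.comp hFinvc).inv₀ fun u => (hfpos _).ne')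
    ((hgc.comp hGinvc).inv₀ fun u => (hgpos _).ne') hFinv1 hGinv1
    (strictMono_of_hasDerivAt_pos hFinv' fun u => inv_pos.2 (hfpos _))
    fun u => inv_pos.2 (hgpos _)
  intro α₁ α₂ hne s hs
  simp only [hI, integral_sq_sub_comp_sub_eq hFinv1 hGinv1]
  exact hconv.2 (mem_univ _) (mem_univ _) hne hs.1 (sub_pos.2 hs.2) (add_sub_cancel s 1)

/-- I(α) = ∫₀¹ (F⁻¹(t) − G⁻¹(t − α))² dt is strictly convex on ℝ. -/
theorem I_strictly_convex
    (f g F G Finv Ginv : ℝ → ℝ) (η : ℝ) (hη : 0 < η)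
    (hfc : Continuous f) (hgc : Continuous g)
    (hfp : Function.Periodic f 1) (hgp : Function.Periodic g 1)
    (hfl : ∀ t, η ≤ f t) (hgl : ∀ t, η ≤ g t)
    (hfm : (∫ t in (0:ℝ)..1, f t) = 1) (hgm : (∫ t in (0:ℝ)..1, g t) = 1)
    (hF : ∀ t, F t = ∫ τ in (0:ℝ)..t, f τ) (hG : ∀ t, G t = ∫ τ in (0:ℝ)..t, g τ)
    (hF₁ : Function.LeftInverse Finv F) (hF₂ : Function.RightInverse Finv F)
    (hG₁ : Function.LeftInverse Ginv G) (hG₂ : Function.RightInverse Ginv G)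
    (I : ℝ → ℝ) (hI : ∀ α, I α = ∫ t in (0:ℝ)..1, (Finv t - Ginv (t - α)) ^ 2) :
    ∀ α₁ α₂ : ℝ, α₁ ≠ α₂ → ∀ s ∈ Set.Ioo (0:ℝ) 1,
      I (s * α₁ + (1 - s) * α₂) < s * I α₁ + (1 - s) * I α₂ :=
  I_strictly_convex_general f g F G Finv Ginv η hη hfc hgc hfp hgp hfl hgl hfm hgm hF hG hF₂ hG₂ I
    hI
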